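/- For any real a > 0 and positive integer n, ∑_{k=1}^{n} ψ₀(k+a)³ = −(1/2)ψ₁(a+n+1) + (1/2)ψ₁(a+1) + (a+n)ψ₀(a+n+1)³ − (3/2)(2a+2n+1)ψ₀(a+n+1)² + 3(2a+2n+1)ψ₀(a+n+1) − aψ₀(a+1)³ + (3/2)(2a+1)ψ₀(a+1)² − 3(2a+1)ψ₀(a+1) − 6n. -/

import Mathlib

open Finset

/-- The `m`-th polygamma function: the `(m+1)`-th derivative of `log ∘ Γ`. -/
noncomputable def psi (m : ℕ) (x : ℝ) : ℝ :=
  iteratedDeriv (m + 1) (fun y => Real.log (Real.Gamma y)) x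

/-!
Differentiating `log Γ(x + 1) = log Γ(x) + log x` gives `ψ₀(x + 1) = ψ₀(x) + 1/x` and
`ψ₁(x + 1) = ψ₁(x) - 1/x²`. The right-hand side is `G(a + n) - G(a)` with `G = psiCubePrimitive`,
and these two recursions show `G(x + 1) - G(x) = ψ₀(x + 1)³` after clearing the denominator
`x + 1`, so the sum telescopes.
-/

open Topology

lemma Real.analyticAt_Gamma {x : ℝ} (hx : 0 < x) : AnalyticAt ℝ Real.Gamma x := by
  have hre : {s : ℂ | 0 < s.re} ∈ 𝓝 (x : ℂ) :=
    (isOpen_lt continuous_const Complex.continuous_re).mem_nhds (by simpa using hx)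
  refine AnalyticAt.re_ofReal (DifferentiableOn.analyticAt (fun s hs => ?_) hre)
  refine (Complex.differentiableAt_Gamma s fun m hm => ?_).differentiableWithinAt
  have : (0 : ℝ) < -m := by simpa [hm] using hs
  linarith [m.cast_nonneg (α := ℝ)]

lemma contDiffAt_logGamma {n : WithTop ℕ∞} {x : ℝ} (hx : 0 < x) :
    ContDiffAt ℝ n (fun y => Real.log (Real.Gamma y)) x :=
  (Real.analyticAt_Gamma hx).contDiffAt.log (Real.Gamma_pos_of_pos hx).ne'

lemma psi_add_one (m : ℕ) {x : ℝ} (hx : 0 < x) :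
    psi m (x + 1) = psi m x + iteratedDeriv (m + 1) Real.log x := by
  have hshift : (fun y => Real.log (Real.Gamma (y + 1))) =ᶠ[𝓝 x]
      (fun y => Real.log (Real.Gamma y)) + Real.log := by
    filter_upwards [Ioi_mem_nhds hx] with y hy
    rw [Pi.add_apply, Real.Gamma_add_one hy.ne',
      Real.log_mul hy.ne' (Real.Gamma_pos_of_pos hy).ne', add_comm]
  rw [psi, ← congrFun (iteratedDeriv_comp_add_const _ _ 1) x, hshift.iteratedDeriv_eq,
    iteratedDeriv_add (contDiffAt_logGamma hx) (Real.contDiffAt_log.2 hx.ne'), psi]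

lemma psi_zero_add_one {x : ℝ} (hx : 0 < x) : psi 0 (x + 1) = psi 0 x + x⁻¹ := by
  rw [psi_add_one 0 hx, zero_add, iteratedDeriv_one, Real.deriv_log]

lemma psi_one_add_one {x : ℝ} (hx : 0 < x) : psi 1 (x + 1) = psi 1 x - (x ^ 2)⁻¹ := by
  rw [psi_add_one 1 hx, iteratedDeriv_succ, iteratedDeriv_one, Real.deriv_log', deriv_inv]
  ring

noncomputable def psiCubePrimitive (x : ℝ) : ℝ :=
  -(1/2) * psi 1 (x + 1) + x * psi 0 (x + 1) ^ 3 - (3/2) * (2*x + 1) * psi 0 (x + 1) ^ 2 +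
    3 * (2*x + 1) * psi 0 (x + 1) - 6 * x

lemma psiCubePrimitive_add_one_sub {x : ℝ} (hx : 0 < x + 1) :
    psiCubePrimitive (x + 1) - psiCubePrimitive x = psi 0 (x + 1) ^ 3 := by
  rw [psiCubePrimitive, psiCubePrimitive, psi_zero_add_one hx, psi_one_add_one hx]
  field_simp
  ring

lemma sum_Icc_psi_zero_pow_three {a : ℝ} (ha : -1 < a) (n : ℕ) :
    ∑ k ∈ Icc 1 n, psi 0 (k + a) ^ 3 = psiCubePrimitive (a + n) - psiCubePrimitive a := by
  induction n with
  | zero => simp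
  | succ n ih =>
    have hstep := psiCubePrimitive_add_one_sub (x := a + n) (by linarith [n.cast_nonneg (α := ℝ)])
    rw [sum_Icc_succ_top (by omega), ih, Nat.cast_succ, add_comm _ a, ← add_assoc, ← hstep]
    ring

theorem stmt_8_general (a : ℝ) (ha : 0 < a) (n : ℕ) :
    ∑ k ∈ Icc 1 n, (psi 0 ((k : ℝ) + a))^3 =
      -(1/2) * psi 1 (a + n + 1) + (1/2) * psi 1 (a + 1) + (a + n) * (psi 0 (a + n + 1))^3 -
        (3/2) * (2*a + 2*n + 1) * (psi 0 (a + n + 1))^2 + 3 * (2*a + 2*n + 1) * psi 0 (a + n + 1) -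
        a * (psi 0 (a + 1))^3 + (3/2) * (2*a + 1) * (psi 0 (a + 1))^2 - 3 * (2*a + 1) * psi 0 (a + 1) - 6*n := by
  rw [sum_Icc_psi_zero_pow_three (by linarith) n, psiCubePrimitive, psiCubePrimitive]
  ring

theorem stmt_8 (a : ℝ) (ha : 0 < a) (n : ℕ) (hn : 0 < n) :
    ∑ k ∈ Icc 1 n, (psi 0 ((k : ℝ) + a))^3 =
      -(1/2) * psi 1 (a + n + 1) + (1/2) * psi 1 (a + 1) + (a + n) * (psi 0 (a + n + 1))^3 -
        (3/2) * (2*a + 2*n + 1) * (psi 0 (a + n + 1))^2 + 3 * (2*a + 2*n + 1) * psi 0 (a + n + 1) -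
        a * (psi 0 (a + 1))^3 + (3/2) * (2*a + 1) * (psi 0 (a + 1))^2 - 3 * (2*a + 1) * psi 0 (a + 1) - 6*n :=
  stmt_8_general a ha n
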